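/- arXiv:2408.09643 — 2 statements merged into one kernel-verified Lean document; each statement's English description precedes it below -/
import Mathlib

section
/- Let $G$ be a finite directed graph (loops allowed) on vertex set $\mathcal{C}$ with no directed walk of length $k$ (i.e., no sequence of $k$ consecutive edges $v_0 \to v_1 \to \cdots \to v_k$, vertices not necessarily distinct). Then the number of directed edges of $G$ is at most $\frac{1}{2}(1 - \frac{1}{k})|\mathcal{C}|^2$. -/
/-!
Let the height of a vertex be the length of the longest walk ending there; since there is no
walk of length `k`, heights lie in `{0, …, k - 1}`, and every edge strictly increases the height.
So the edges are among the pairs `(u, v)` with `height u < height v`, of which there are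
`(n² - ∑ᵢ aᵢ²) / 2` where `aᵢ` is the number of vertices of height `i`; by Cauchy–Schwarz,
`∑ᵢ aᵢ² ≥ n² / k`.
-/

open Finset

section Walks

variable {α : Type*}

def IsDirectedWalk (E : Set (α × α)) {m : ℕ} (w : Fin (m + 1) → α) : Prop :=
  ∀ i : Fin m, (w i.castSucc, w i.succ) ∈ E

namespace IsDirectedWalk

variable {E : Set (α × α)} {m : ℕ} {w : Fin (m + 1) → α}

theorem snoc (hw : IsDirectedWalk E w) {v : α} (hv : (w (Fin.last m), v) ∈ E) :
    IsDirectedWalk E (Fin.snoc w v : Fin (m + 2) → α) := by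
  refine Fin.lastCases ?_ fun i => ?_
  · simpa only [Fin.snoc_castSucc, Fin.succ_last, Fin.snoc_last] using hv
  · simpa only [Fin.snoc_castSucc, Fin.succ_castSucc] using hw i

theorem castLE (hw : IsDirectedWalk E w) {n : ℕ} (hnm : n ≤ m) :
    IsDirectedWalk E (w ∘ Fin.castLE (Nat.succ_le_succ hnm)) := fun i => by
  simpa using hw (Fin.castLE hnm i)

end IsDirectedWalk

def HasWalkTo (E : Set (α × α)) (m : ℕ) (v : α) : Prop :=
  ∃ w : Fin (m + 1) → α, IsDirectedWalk E w ∧ w (Fin.last m) = v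

variable {E : Set (α × α)} {k : ℕ}

theorem hasWalkTo_zero (v : α) : HasWalkTo E 0 v :=
  ⟨fun _ => v, fun i => i.elim0, rfl⟩

theorem HasWalkTo.lt (hk : ¬ ∃ w : Fin (k + 1) → α, IsDirectedWalk E w) {m : ℕ} {v : α}
    (hv : HasWalkTo E m v) : m < k := by
  obtain ⟨w, hw, -⟩ := hv
  by_contra! hkm
  exact hk ⟨_, hw.castLE hkm⟩

theorem HasWalkTo.succ {m : ℕ} {u v : α} (hu : HasWalkTo E m u) (huv : (u, v) ∈ E) :
    HasWalkTo E (m + 1) v := by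
  obtain ⟨w, hw, rfl⟩ := hu
  exact ⟨_, hw.snoc huv, Fin.snoc_last ..⟩

open Classical in
noncomputable def walkHeight (E : Set (α × α)) (k : ℕ) (v : α) : ℕ :=
  Nat.findGreatest (fun m => HasWalkTo E m v) k

theorem hasWalkTo_walkHeight (k : ℕ) (v : α) : HasWalkTo E (walkHeight E k v) v := by
  classical
  exact Nat.findGreatest_spec (P := fun m => HasWalkTo E m v) (Nat.zero_le k) (hasWalkTo_zero v)

theorem walkHeight_lt (hk : ¬ ∃ w : Fin (k + 1) → α, IsDirectedWalk E w) (v : α) :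
    walkHeight E k v < k :=
  (hasWalkTo_walkHeight k v).lt hk

theorem walkHeight_lt_walkHeight (hk : ¬ ∃ w : Fin (k + 1) → α, IsDirectedWalk E w)
    {u v : α} (huv : (u, v) ∈ E) : walkHeight E k u < walkHeight E k v := by
  classical
  exact Nat.le_findGreatest (walkHeight_lt hk u) ((hasWalkTo_walkHeight k u).succ huv)

end Walks

section Counting

variable {α β : Type*} [Fintype α] (f : α → β)

theorem card_filter_eq_eq_sum_sq [DecidableEq β] {s : Finset β} (hf : ∀ a, f a ∈ s) :
    #{p : α × α | f p.1 = f p.2} = ∑ b ∈ s, #{a | f a = b} ^ 2 := by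
  rw [card_eq_sum_card_fiberwise (f := fun p : α × α => f p.1) (t := s) (fun p _ => hf p.1)]
  refine sum_congr rfl fun b _ => ?_
  rw [sq, ← card_product]
  congr 1
  ext ⟨x, y⟩
  simp only [mem_filter, mem_univ, true_and, mem_product]
  constructor
  · rintro ⟨hxy, rfl⟩; exact ⟨rfl, hxy.symm⟩
  · rintro ⟨rfl, hy⟩; exact ⟨hy.symm, rfl⟩

theorem card_sq_le_card_mul_card_filter_eq [DecidableEq β] {s : Finset β} (hf : ∀ a, f a ∈ s) :
    Fintype.card α ^ 2 ≤ #s * #{p : α × α | f p.1 = f p.2} := by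
  rw [card_filter_eq_eq_sum_sq f hf, ← card_univ,
    card_eq_sum_card_fiberwise (f := f) (t := s) (fun a _ => hf a)]
  exact sq_sum_le_card_mul_sum_sq

variable [LinearOrder β]

theorem two_mul_card_filter_lt_add_card_filter_eq :
    2 * #{p : α × α | f p.1 < f p.2} + #{p : α × α | f p.1 = f p.2} = Fintype.card α ^ 2 := by
  have hswap : #{p : α × α | f p.2 < f p.1} = #{p : α × α | f p.1 < f p.2} :=
    card_equiv (Equiv.prodComm α α) (by simp)
  have htrichotomy : ∀ p : α × α,
      (if f p.1 < f p.2 then 1 else 0) + (if f p.2 < f p.1 then 1 else 0) +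
        (if f p.1 = f p.2 then 1 else 0) = 1 := fun p => by
    rcases lt_trichotomy (f p.1) (f p.2) with h | h | h
    · simp [h, h.not_gt, h.ne]
    · simp [h]
    · simp [h, h.not_gt, h.ne']
  calc 2 * #{p : α × α | f p.1 < f p.2} + #{p : α × α | f p.1 = f p.2}
      = #{p : α × α | f p.1 < f p.2} + #{p : α × α | f p.2 < f p.1} +
          #{p : α × α | f p.1 = f p.2} := by rw [hswap, two_mul]
    _ = ∑ p : α × α, ((if f p.1 < f p.2 then 1 else 0) + (if f p.2 < f p.1 then 1 else 0) +
          (if f p.1 = f p.2 then 1 else 0)) := by simp only [card_filter, sum_add_distrib]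
    _ = Fintype.card α ^ 2 := by simp [htrichotomy, sq]

theorem card_filter_lt_le_of_forall_mem {s : Finset β} (hf : ∀ a, f a ∈ s) :
    (#{p : α × α | f p.1 < f p.2} : ℚ) ≤ 1 / 2 * (1 - 1 / #s) * Fintype.card α ^ 2 := by
  have hpart : 2 * (#{p : α × α | f p.1 < f p.2} : ℚ) + #{p : α × α | f p.1 = f p.2} =
      Fintype.card α ^ 2 := by exact_mod_cast two_mul_card_filter_lt_add_card_filter_eq f
  have hCS : (Fintype.card α : ℚ) ^ 2 ≤ #s * #{p : α × α | f p.1 = f p.2} := by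
    exact_mod_cast card_sq_le_card_mul_card_filter_eq f hf
  rcases (#s).eq_zero_or_pos with hs | hs
  · simp only [hs, CharP.cast_eq_zero, div_zero, sub_zero]
    linarith
  · have hs' : (0 : ℚ) < #s := by exact_mod_cast hs
    rw [one_sub_div hs'.ne', ← sub_nonneg]
    field_simp
    nlinarith

end Counting

/-- A finite directed graph (loops allowed) with no directed walk of length `k`
has at most `(1/2)(1 - 1/k)|C|²` edges. -/
theorem stmt2 {α : Type*} [Fintype α] (E : Finset (α × α)) (k : ℕ)
    (h : ¬ ∃ v : Fin (k + 1) → α, ∀ i : Fin k, (v i.castSucc, v i.succ) ∈ E) :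
    (E.card : ℚ) ≤ (1 / 2) * (1 - 1 / k) * (Fintype.card α : ℚ) ^ 2 := by
  set height := walkHeight (E : Set (α × α)) k
  have hE : E ⊆ ({p | height p.1 < height p.2} : Finset (α × α)) := fun p hp =>
    mem_filter.2 ⟨mem_univ p, walkHeight_lt_walkHeight h hp⟩
  calc (E.card : ℚ) ≤ #{p : α × α | height p.1 < height p.2} := by exact_mod_cast card_le_card hE
    _ ≤ _ := by
      simpa using card_filter_lt_le_of_forall_mem height (s := range k)
        fun v => mem_range.2 (walkHeight_lt h v)
end

section
/- Let $\mathcal{P} = (\mathcal{C}, \mathcal{A})$ be a palette with density $d(\mathcal{P}) > \frac{1}{2} - \frac{1}{2k}$ for some integer $k \geq 1$. Then $\mathcal{A}$ contains $k$ triples of the form $(a_1, b_1, a_2), (a_2, b_2, a_3), \dots, (a_k, b_k, a_{k+1})$, where the colors $a_i$ and $b_j$ are not necessarily distinct. -/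
/-!
If `A` has no chain of `k` triples, rank each colour by the length of the longest chain starting
at it; the rank takes fewer than `k` values and drops strictly from `a` to `c` along every triple
`(a, b, c) ∈ A`. So `|A| ≤ |C| · #{(a, c) : rank c < rank a}`, and by symmetry and
Cauchy–Schwarz over the `k` rank classes at most a fraction `(1 - 1/k)/2` of all pairs `(a, c)`
has a strict rank drop.
-/

open Finset

section Chains

variable {α : Type*} (R : α → α → Prop)

def HasChainFrom (m : ℕ) (v : α) : Prop :=
  ∃ a : Fin (m + 1) → α, a 0 = v ∧ ∀ i : Fin m, R (a i.castSucc) (a i.succ)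

variable {R}

lemma hasChainFrom_zero (v : α) : HasChainFrom R 0 v :=
  ⟨fun _ => v, rfl, Fin.elim0⟩

lemma HasChainFrom.cons {m : ℕ} {x z : α} (h : HasChainFrom R m z) (hxz : R x z) :
    HasChainFrom R (m + 1) x := by
  obtain ⟨a, rfl, ha⟩ := h
  refine ⟨Fin.cons x a, rfl, fun i => ?_⟩
  cases i using Fin.cases with
  | zero => exact hxz
  | succ j => simpa only [← Fin.succ_castSucc, Fin.cons_succ] using ha j

theorem exists_rank_of_forall_not_hasChainFrom {k : ℕ} (h : ∀ v, ¬ HasChainFrom R k v) :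
    ∃ f : α → Fin k, ∀ x z, R x z → f z < f x := by
  classical
  -- the rank: length of the longest chain from `v`, capped at `k`
  let r v := Nat.findGreatest (HasChainFrom R · v) k
  have r_chain v : HasChainFrom R (r v) v :=
    Nat.findGreatest_spec (P := (HasChainFrom R · v)) (Nat.zero_le k) (hasChainFrom_zero v)
  have r_lt v : r v < k :=
    (Nat.findGreatest_le k).lt_of_ne fun hk => h v (hk ▸ r_chain v)
  exact ⟨fun v => ⟨r v, r_lt v⟩, fun x z hxz =>
    Nat.le_findGreatest (r_lt z) ((r_chain z).cons hxz)⟩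

end Chains

section Counting

variable {α β : Type*} [Fintype α] [LinearOrder β] (f : α → β)

lemma card_filter_eq_add_two_mul_card_filter_lt :
    #{p : α × α | f p.1 = f p.2} + 2 * #{p : α × α | f p.2 < f p.1} = Fintype.card α ^ 2 := by
  have swap : #{p : α × α | f p.1 < f p.2} = #{p : α × α | f p.2 < f p.1} :=
    card_equiv (Equiv.prodComm α α) (by simp)
  have trichotomy (p : α × α) : ((if f p.1 = f p.2 then 1 else 0) + (if f p.2 < f p.1 then 1 else 0)
      + (if f p.1 < f p.2 then 1 else 0) : ℕ) = 1 := by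
    rcases lt_trichotomy (f p.1) (f p.2) with h | h | h <;> grind
  have total : #{p : α × α | f p.1 = f p.2} + #{p : α × α | f p.2 < f p.1}
      + #{p : α × α | f p.1 < f p.2} = Fintype.card α ^ 2 := by
    simp only [card_filter, ← sum_add_distrib, trichotomy, sum_const, card_univ, Fintype.card_prod,
      smul_eq_mul, mul_one, sq]
  omega

lemma sq_card_le_card_mul_card_filter_eq [Fintype β] :
    Fintype.card α ^ 2 ≤ Fintype.card β * #{p : α × α | f p.1 = f p.2} := by
  have fibers : #{p : α × α | f p.1 = f p.2} = ∑ i, #{x | f x = i} ^ 2 := by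
    rw [card_eq_sum_card_fiberwise (f := fun p => f p.1) (t := univ) fun _ _ => mem_univ _]
    refine sum_congr rfl fun i _ => ?_
    rw [sq, ← card_product, ← filter_product]
    congr 1
    ext p
    simp only [mem_filter, mem_univ, mem_product, true_and]
    grind
  rw [fibers, ← card_univ, card_eq_sum_card_fiberwise (f := f) (t := univ) fun _ _ => mem_univ _]
  exact sq_sum_le_card_mul_sum_sq

lemma card_le_card_mul_card_filter_lt (A : Finset (α × α × α)) (hA : ∀ t ∈ A, f t.2.2 < f t.1) :
    #A ≤ Fintype.card α * #{p : α × α | f p.2 < f p.1} := by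
  rw [← card_univ, ← card_product]
  refine card_le_card_of_injOn (fun t => (t.2.1, t.1, t.2.2)) (fun t ht => ?_) ?_
  · simpa using hA t ht
  · rintro ⟨x, y, z⟩ - ⟨x', y', z'⟩ - h
    simp_all

/-- A rank function into `β` that drops along every triple bounds the density of `A` by
`1/2 - 1/(2 |β|)`. -/
theorem two_mul_card_mul_card_add_pow_le_of_rank_lt [Fintype β] (A : Finset (α × α × α))
    (hA : ∀ t ∈ A, f t.2.2 < f t.1) :
    2 * Fintype.card β * #A + Fintype.card α ^ 3 ≤ Fintype.card β * Fintype.card α ^ 3 := by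
  set n := Fintype.card α
  set D := #{p : α × α | f p.1 = f p.2}
  set S := #{p : α × α | f p.2 < f p.1}
  have hsplit : D + 2 * S = n ^ 2 := card_filter_eq_add_two_mul_card_filter_lt f
  calc 2 * Fintype.card β * #A + n ^ 3
      ≤ 2 * Fintype.card β * (n * S) + n * n ^ 2 := by
        gcongr
        · exact card_le_card_mul_card_filter_lt f A hA
        · exact (pow_succ' n 2).le
    _ ≤ 2 * Fintype.card β * (n * S) + n * (Fintype.card β * D) := by
        gcongr; exact sq_card_le_card_mul_card_filter_eq f
    _ = Fintype.card β * n * (D + 2 * S) := by ring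
    _ = Fintype.card β * n ^ 3 := by rw [hsplit]; ring

end Counting

theorem stmt6_general {α : Type*} [Fintype α] [Nonempty α] (A : Finset (α × α × α))
    (k : ℕ)
    (hd : (1 / 2 - 1 / (2 * k) : ℚ) < (A.card : ℚ) / (Fintype.card α : ℚ) ^ 3) :
    ∃ (a : Fin (k + 1) → α) (b : Fin k → α),
      ∀ i : Fin k, (a i.castSucc, b i, a i.succ) ∈ A := by
  by_contra hno
  obtain ⟨f, hf⟩ := exists_rank_of_forall_not_hasChainFrom (R := fun x z => ∃ y, (x, y, z) ∈ A)
    (k := k) fun v ⟨a, _, ha⟩ => hno ⟨a, fun i => (ha i).choose, fun i => (ha i).choose_spec⟩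
  have hbound := two_mul_card_mul_card_add_pow_le_of_rank_lt f A fun t ht => hf _ _ ⟨t.2.1, ht⟩
  rw [Fintype.card_fin] at hbound
  have hk : (0 : ℚ) < k := by exact_mod_cast (f (Classical.arbitrary α)).pos
  have hn : (0 : ℚ) < Fintype.card α := by exact_mod_cast Fintype.card_pos
  rw [lt_div_iff₀ (by positivity)] at hd
  field_simp at hd
  have : (2 * k * #A + Fintype.card α ^ 3 : ℚ) ≤ k * Fintype.card α ^ 3 := by exact_mod_cast hbound
  linarith

/-- Any palette `(C, A)` with density greater than `1/2 - 1/(2k)` contains a chain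
of `k` triples `(a₁,b₁,a₂), (a₂,b₂,a₃), …, (a_k,b_k,a_{k+1})`. -/
theorem stmt6 {α : Type*} [Fintype α] [Nonempty α] (A : Finset (α × α × α))
    (k : ℕ) (hk : 1 ≤ k)
    (hd : (1 / 2 - 1 / (2 * k) : ℚ) < (A.card : ℚ) / (Fintype.card α : ℚ) ^ 3) :
    ∃ (a : Fin (k + 1) → α) (b : Fin k → α),
      ∀ i : Fin k, (a i.castSucc, b i, a i.succ) ∈ A :=
  stmt6_general A k hd
end
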